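/- arXiv:2409.10002 — 3 statements merged into one kernel-verified Lean document; each statement's English description precedes it below -/
import Mathlib

section
/- Let X₁ ⊆ ℂ^n and X₂ ⊆ ℂ^m be open sets, and let φ₁ and φ₂ be weights on X₁ and X₂ respectively, each satisfying the evaluation bound. Then the product weight φ₁φ₂ on X₁ × X₂, defined by (φ₁φ₂)(z₁,z₂) := φ₁(z₁)·φ₂(z₂), also satisfies the evaluation bound: for all compact sets Y₁ ⊆ X₁ and Y₂ ⊆ X₂ there exists a constant C such that |f(z₁,z₂)|² ≤ C·∫_{X₁×X₂} |f|²·φ₁φ₂ dλ for every f ∈ A²(X₁×X₂, φ₁φ₂) and every (z₁,z₂) ∈ Y₁×Y₂. -/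
open MeasureTheory

noncomputable section

/-- `f` belongs to the weighted Bergman space `A²(X, μ)`: it is holomorphic on `X` and
`|f|² μ` is integrable on `X`. -/
def MemA2 {E : Type*} [NormedAddCommGroup E] [NormedSpace ℂ E] [MeasureSpace E]
    (X : Set E) (μ : E → ℝ) (f : E → ℂ) : Prop :=
  DifferentiableOn ℂ f X ∧ IntegrableOn (fun x => ‖f x‖ ^ 2 * μ x) X volume

/-- The squared norm `‖f‖²_{X,μ} = ∫_X |f|² μ dλ`. -/
def normSqA2 {E : Type*} [NormedAddCommGroup E] [NormedSpace ℂ E] [MeasureSpace E]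
    (X : Set E) (μ : E → ℝ) (f : E → ℂ) : ℝ :=
  ∫ x in X, ‖f x‖ ^ 2 * μ x

/-- The inner product `⟨f,g⟩_{X,μ} = ∫_X f ·conj(g)· μ dλ`. -/
def innerA2 {E : Type*} [NormedAddCommGroup E] [NormedSpace ℂ E] [MeasureSpace E]
    (X : Set E) (μ : E → ℝ) (f g : E → ℂ) : ℂ :=
  ∫ x in X, f x * (starRingEnd ℂ) (g x) * (μ x : ℂ)

/-- `μ` is a weight on `X`: measurable and positive a.e. on `X`. -/
def IsWeight {E : Type*} [NormedAddCommGroup E] [NormedSpace ℂ E] [MeasureSpace E]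
    (X : Set E) (μ : E → ℝ) : Prop :=
  Measurable μ ∧ ∀ᵐ x ∂(volume.restrict X), 0 < μ x

/-- The weight `μ` on `X` satisfies the evaluation bound. -/
def EvalBound {E : Type*} [NormedAddCommGroup E] [NormedSpace ℂ E] [MeasureSpace E]
    (X : Set E) (μ : E → ℝ) : Prop :=
  ∀ K : Set E, K ⊆ X → IsCompact K → ∃ C : ℝ, ∀ f : E → ℂ, MemA2 X μ f →
    ∀ z ∈ K, ‖f z‖ ^ 2 ≤ C * normSqA2 X μ f

/-- The product weight `(φ₁φ₂)(z₁,z₂) = φ₁(z₁)·φ₂(z₂)`. -/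
def prodWeight {F G : Type*} (φ₁ : F → ℝ) (φ₂ : G → ℝ) : F × G → ℝ :=
  fun p => φ₁ p.1 * φ₂ p.2

/-! Apply the evaluation bound of `φ₁` at `z₁` to `f(·, z₂)` and that of `φ₂` at `z₂` to every
slice `f(x, ·)`, then integrate with Tonelli:
`|f(z₁,z₂)|² ≤ C₁ ∫ |f(x,z₂)|² φ₁(x) dx ≤ C₁ C₂ ∫∫ |f(x,y)|² φ₁(x) φ₂(y) dy dx`.
Nothing guarantees a priori that the slices lie in the weighted Bergman spaces, so the bounds are
carried in `ℝ≥0∞`, where the one-variable evaluation bound holds for every holomorphic function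
(trivially so when its weighted norm is infinite). -/

open scoped ENNReal NNReal

section

variable {E : Type*} [NormedAddCommGroup E] [NormedSpace ℂ E] [MeasureSpace E]
  {X : Set E} {μ : E → ℝ} {f : E → ℂ}

theorem normSqA2_nonneg (hμ : ∀ᵐ x ∂(volume.restrict X), 0 ≤ μ x) : 0 ≤ normSqA2 X μ f :=
  integral_nonneg_of_ae <| hμ.mono fun _ hx => by positivity

theorem MemA2.ofReal_normSqA2 (hf : MemA2 X μ f) (hμ : ∀ᵐ x ∂(volume.restrict X), 0 ≤ μ x) :
    ENNReal.ofReal (normSqA2 X μ f) = ∫⁻ x in X, ENNReal.ofReal (‖f x‖ ^ 2 * μ x) :=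
  ofReal_integral_eq_lintegral_ofReal hf.2 <| hμ.mono fun _ hx => by positivity

theorem DifferentiableOn.aemeasurable_norm_sq_mul [OpensMeasurableSpace E]
    (hf : DifferentiableOn ℂ f X) (hX : MeasurableSet X) (hμ : Measurable μ) :
    AEMeasurable (fun x => ‖f x‖ ^ 2 * μ x) (volume.restrict X) :=
  (hf.continuousOn.aemeasurable hX).norm.pow_const 2 |>.mul hμ.aemeasurable

theorem memA2_of_lintegral_ne_top [OpensMeasurableSpace E] (hX : MeasurableSet X)
    (hμ : Measurable μ) (hμ₀ : ∀ᵐ x ∂(volume.restrict X), 0 ≤ μ x) (hf : DifferentiableOn ℂ f X)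
    (hfin : ∫⁻ x in X, ENNReal.ofReal (‖f x‖ ^ 2 * μ x) ≠ ∞) : MemA2 X μ f :=
  ⟨hf, (lintegral_ofReal_ne_top_iff_integrable
    (hf.aemeasurable_norm_sq_mul hX hμ).aestronglyMeasurable
    (hμ₀.mono fun _ hx => by positivity)).1 hfin⟩

theorem EvalBound.exists_lintegral_bound [OpensMeasurableSpace E] (he : EvalBound X μ)
    (hX : MeasurableSet X) (hμ : IsWeight X μ) {K : Set E} (hK : K ⊆ X) (hKc : IsCompact K) :
    ∃ C : ℝ≥0, ∀ g : E → ℂ, DifferentiableOn ℂ g X → ∀ z ∈ K,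
      ENNReal.ofReal (‖g z‖ ^ 2) ≤ C * ∫⁻ x in X, ENNReal.ofReal (‖g x‖ ^ 2 * μ x) := by
  obtain ⟨C, hC⟩ := he K hK hKc
  have hμ₀ : ∀ᵐ x ∂(volume.restrict X), 0 ≤ μ x := hμ.2.mono fun _ hx => hx.le
  refine ⟨(max C 1).toNNReal, fun g hg z hz => ?_⟩
  rcases eq_or_ne (∫⁻ x in X, ENNReal.ofReal (‖g x‖ ^ 2 * μ x)) ∞ with hI | hI
  · rw [hI, ENNReal.mul_top (by simp)]
    exact le_top
  have hgA2 := memA2_of_lintegral_ne_top hX hμ.1 hμ₀ hg hI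
  calc ENNReal.ofReal (‖g z‖ ^ 2)
      ≤ ENNReal.ofReal (max C 1 * normSqA2 X μ g) := by
        gcongr
        exact (hC g hgA2 z hz).trans <| by gcongr; exacts [normSqA2_nonneg hμ₀, le_max_left _ _]
    _ = _ := by
        rw [ENNReal.ofReal_mul (by positivity), hgA2.ofReal_normSqA2 hμ₀]
        rfl

end

theorem IsWeight.prod {E F : Type*} [NormedAddCommGroup E] [NormedSpace ℂ E] [MeasureSpace E]
    [NormedAddCommGroup F] [NormedSpace ℂ F] [MeasureSpace F]
    [SFinite (volume : Measure E)] [SFinite (volume : Measure F)]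
    {X₁ : Set E} {X₂ : Set F} {φ₁ : E → ℝ} {φ₂ : F → ℝ}
    (hw₁ : IsWeight X₁ φ₁) (hw₂ : IsWeight X₂ φ₂) :
    IsWeight (X₁ ×ˢ X₂) (prodWeight φ₁ φ₂) := by
  refine ⟨(hw₁.1.comp measurable_fst).mul (hw₂.1.comp measurable_snd), ?_⟩
  rw [Measure.volume_eq_prod, ← Measure.prod_restrict]
  filter_upwards [Measure.quasiMeasurePreserving_fst.ae hw₁.2,
    Measure.quasiMeasurePreserving_snd.ae hw₂.2] with p h₁ h₂
  exact mul_pos h₁ h₂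

theorem ofReal_mul_le_lintegral_prodWeight {E F : Type*} [MeasureSpace F] {X₂ : Set F}
    {φ₁ : E → ℝ} {φ₂ : F → ℝ} {f : E × F → ℂ} {C : ℝ≥0} {x : E} {z : F} (hx : 0 ≤ φ₁ x)
    (hz : ENNReal.ofReal (‖f (x, z)‖ ^ 2) ≤ C * ∫⁻ y in X₂, ENNReal.ofReal (‖f (x, y)‖ ^ 2 * φ₂ y)) :
    ENNReal.ofReal (‖f (x, z)‖ ^ 2 * φ₁ x) ≤
      C * ∫⁻ y in X₂, ENNReal.ofReal (‖f (x, y)‖ ^ 2 * prodWeight φ₁ φ₂ (x, y)) :=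
  calc ENNReal.ofReal (‖f (x, z)‖ ^ 2 * φ₁ x)
      = ENNReal.ofReal (‖f (x, z)‖ ^ 2) * ENNReal.ofReal (φ₁ x) :=
        ENNReal.ofReal_mul (by positivity)
    _ ≤ C * (∫⁻ y in X₂, ENNReal.ofReal (‖f (x, y)‖ ^ 2 * φ₂ y)) * ENNReal.ofReal (φ₁ x) := by
        gcongr
    _ = _ := by
        rw [mul_assoc, ← lintegral_mul_const' _ _ ENNReal.ofReal_ne_top]
        refine congrArg _ (lintegral_congr fun y => ?_)
        rw [← ENNReal.ofReal_mul' hx, prodWeight]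
        ring_nf

/-- if the weights `φ₁`, `φ₂` on open sets `X₁ ⊆ ℂⁿ`, `X₂ ⊆ ℂᵐ` satisfy the
evaluation bound, then so does the product weight `φ₁φ₂` on `X₁ × X₂`. -/
theorem product_weight_evaluation_bound {n m : ℕ}
    (X₁ : Set (Fin n → ℂ)) (X₂ : Set (Fin m → ℂ))
    (hX₁ : IsOpen X₁) (hX₂ : IsOpen X₂)
    (φ₁ : (Fin n → ℂ) → ℝ) (φ₂ : (Fin m → ℂ) → ℝ)
    (hw₁ : IsWeight X₁ φ₁) (hw₂ : IsWeight X₂ φ₂)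
    (he₁ : EvalBound X₁ φ₁) (he₂ : EvalBound X₂ φ₂)
    (Y₁ : Set (Fin n → ℂ)) (hY₁ : Y₁ ⊆ X₁) (hY₁c : IsCompact Y₁)
    (Y₂ : Set (Fin m → ℂ)) (hY₂ : Y₂ ⊆ X₂) (hY₂c : IsCompact Y₂) :
    ∃ C : ℝ, ∀ f : (Fin n → ℂ) × (Fin m → ℂ) → ℂ,
      MemA2 (X₁ ×ˢ X₂) (prodWeight φ₁ φ₂) f →
      ∀ z₁ ∈ Y₁, ∀ z₂ ∈ Y₂,
        ‖f (z₁, z₂)‖ ^ 2 ≤ C * normSqA2 (X₁ ×ˢ X₂) (prodWeight φ₁ φ₂) f := by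
  obtain ⟨C₁, hC₁⟩ := he₁.exists_lintegral_bound hX₁.measurableSet hw₁ hY₁ hY₁c
  obtain ⟨C₂, hC₂⟩ := he₂.exists_lintegral_bound hX₂.measurableSet hw₂ hY₂ hY₂c
  refine ⟨(C₁ * C₂ : ℝ≥0), fun f hf z₁ hz₁ z₂ hz₂ => ?_⟩
  have hw := hw₁.prod hw₂
  have hw₀ := hw.2.mono fun _ hp => hp.le
  have hslice : ∀ᵐ x ∂(volume.restrict X₁), ENNReal.ofReal (‖f (x, z₂)‖ ^ 2 * φ₁ x) ≤
      C₂ * ∫⁻ y in X₂, ENNReal.ofReal (‖f (x, y)‖ ^ 2 * prodWeight φ₁ φ₂ (x, y)) := by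
    filter_upwards [hw₁.2, ae_restrict_mem hX₁.measurableSet] with x hx₀ hx
    refine ofReal_mul_le_lintegral_prodWeight hx₀.le (hC₂ _ ?_ z₂ hz₂)
    exact hf.1.comp ((differentiable_const x).prodMk differentiable_id).differentiableOn
      fun y hy => ⟨hx, hy⟩
  have hfz₂ : DifferentiableOn ℂ (fun x => f (x, z₂)) X₁ :=
    hf.1.comp (differentiable_id.prodMk (differentiable_const z₂)).differentiableOn
      fun x hx => ⟨hx, hY₂ hz₂⟩
  rw [← ENNReal.ofReal_le_ofReal_iff (mul_nonneg (by positivity) (normSqA2_nonneg hw₀))]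
  calc ENNReal.ofReal (‖f (z₁, z₂)‖ ^ 2)
      ≤ C₁ * ∫⁻ x in X₁, ENNReal.ofReal (‖f (x, z₂)‖ ^ 2 * φ₁ x) := hC₁ _ hfz₂ z₁ hz₁
    _ ≤ C₁ * ∫⁻ x in X₁, C₂ * ∫⁻ y in X₂,
          ENNReal.ofReal (‖f (x, y)‖ ^ 2 * prodWeight φ₁ φ₂ (x, y)) :=
        mul_le_mul_right (lintegral_mono_ae hslice) _
    _ = _ := by
        rw [lintegral_const_mul' _ _ ENNReal.coe_ne_top,
          ← setLIntegral_prod _ (hf.1.aemeasurable_norm_sq_mul (hX₁.prod hX₂).measurableSet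
            hw.1).ennreal_ofReal,
          ← Measure.volume_eq_prod, ← hf.ofReal_normSqA2 hw₀, ENNReal.ofReal_mul (by positivity),
          ENNReal.ofReal_coe_nnreal, ENNReal.coe_mul, mul_assoc]
end
end

section
/- Let X₁ ⊆ ℂ^n and X₂ ⊆ ℂ^m be open sets, and let φ₁ and φ₂ be weights on X₁ and X₂ respectively, each satisfying the evaluation bound. Then every f ∈ A²(X₁×X₂, φ₁φ₂) has all slices square-integrable: for every ζ ∈ X₁ the function u ↦ f(ζ,u) belongs to A²(X₂,φ₂), and for every w ∈ X₂ the function z ↦ f(z,w) belongs to A²(X₁,φ₁). -/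
/-!
Fix `ζ ∈ X₁`. By Fubini, for almost every `u ∈ X₂` (where `φ₂ u > 0`) the slice `z ↦ f (z, u)`
lies in `A²(X₁, φ₁)`, so the evaluation bound at the compact set `{ζ}` gives
`|f (ζ, u)|² φ₂(u) ≤ C ∫_{X₁} |f (z, u)|² φ₁(z) φ₂(u) dz`. The right-hand side is integrable in `u`,
again by Fubini, hence so is the left-hand side. The other family of slices follows by swapping
the factors.
-/

open MeasureTheory

noncomputable section

lemma integral_prodWeight_slice {E F : Type*} [NormedAddCommGroup E] [NormedSpace ℂ E]
    [MeasureSpace E] (X₁ : Set E) (φ₁ : E → ℝ) (φ₂ : F → ℝ) (f : E × F → ℂ) (u : F) :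
    ∫ z in X₁, ‖f (z, u)‖ ^ 2 * prodWeight φ₁ φ₂ (z, u) =
      normSqA2 X₁ φ₁ (fun z => f (z, u)) * φ₂ u := by
  rw [normSqA2, ← integral_mul_const]
  simp only [prodWeight, mul_assoc]

variable {E F : Type*}
  [NormedAddCommGroup E] [NormedSpace ℂ E] [MeasureSpace E] [SigmaFinite (volume : Measure E)]
  [NormedAddCommGroup F] [NormedSpace ℂ F] [MeasureSpace F] [SigmaFinite (volume : Measure F)]
  {X₁ : Set E} {X₂ : Set F} {φ₁ : E → ℝ} {φ₂ : F → ℝ} {f : E × F → ℂ}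

lemma MemA2.integrable_prod (hf : MemA2 (X₁ ×ˢ X₂) (prodWeight φ₁ φ₂) f) :
    Integrable (fun p => ‖f p‖ ^ 2 * prodWeight φ₁ φ₂ p)
      ((volume.restrict X₁).prod (volume.restrict X₂)) := by
  rw [Measure.prod_restrict]
  exact hf.2

lemma MemA2.swap (hf : MemA2 (X₁ ×ˢ X₂) (prodWeight φ₁ φ₂) f) :
    MemA2 (X₂ ×ˢ X₁) (prodWeight φ₂ φ₁) (f ∘ Prod.swap) := by
  refine ⟨hf.1.comp (differentiable_snd.prodMk differentiable_fst).differentiableOn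
    fun p hp => ⟨hp.2, hp.1⟩, ?_⟩
  have hswap : (fun p => ‖(f ∘ Prod.swap) p‖ ^ 2 * prodWeight φ₂ φ₁ p) =
      (fun p => ‖f p‖ ^ 2 * prodWeight φ₁ φ₂ p) ∘ Prod.swap := by
    funext p
    simp only [Function.comp_apply, prodWeight, Prod.fst_swap, Prod.snd_swap, mul_comm]
  rw [IntegrableOn, Measure.volume_eq_prod, ← Measure.prod_restrict, hswap]
  exact hf.integrable_prod.swap

lemma MemA2.ae_memA2_slice (hf : MemA2 (X₁ ×ˢ X₂) (prodWeight φ₁ φ₂) f)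
    (hX₂ : MeasurableSet X₂) (hφ₂ : ∀ᵐ u ∂volume.restrict X₂, 0 < φ₂ u) :
    ∀ᵐ u ∂volume.restrict X₂, MemA2 X₁ φ₁ (fun z => f (z, u)) := by
  filter_upwards [hf.integrable_prod.prod_left_ae, hφ₂, ae_restrict_mem hX₂]
    with u hint hpos hu
  refine ⟨hf.1.comp (differentiable_id.prodMk (differentiable_const u)).differentiableOn
    fun z hz => ⟨hz, hu⟩, ?_⟩
  unfold IntegrableOn
  simpa [prodWeight, mul_assoc, hpos.ne'] using hint.mul_const (φ₂ u)⁻¹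

theorem MemA2.memA2_slice [OpensMeasurableSpace F] (hf : MemA2 (X₁ ×ˢ X₂) (prodWeight φ₁ φ₂) f)
    (hX₂ : IsOpen X₂) (hw₂ : IsWeight X₂ φ₂) (he₁ : EvalBound X₁ φ₁) {ζ : E} (hζ : ζ ∈ X₁) :
    MemA2 X₂ φ₂ (fun u => f (ζ, u)) := by
  have hdiff : DifferentiableOn ℂ (fun u => f (ζ, u)) X₂ :=
    hf.1.comp ((differentiable_const ζ).prodMk differentiable_id).differentiableOn
      fun u hu => ⟨hζ, hu⟩
  refine ⟨hdiff, ?_⟩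
  obtain ⟨C, hC⟩ := he₁ {ζ} (Set.singleton_subset_iff.mpr hζ) isCompact_singleton
  have hbound : ∀ᵐ u ∂volume.restrict X₂,
      ‖‖f (ζ, u)‖ ^ 2 * φ₂ u‖ ≤ C * (normSqA2 X₁ φ₁ (fun z => f (z, u)) * φ₂ u) := by
    filter_upwards [hf.ae_memA2_slice hX₂.measurableSet hw₂.2, hw₂.2] with u hu hpos
    rw [Real.norm_of_nonneg (by positivity), ← mul_assoc]
    exact mul_le_mul_of_nonneg_right (hC _ hu ζ rfl) hpos.le
  refine Integrable.mono' ?_ ?_ hbound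
  · simp_rw [← integral_prodWeight_slice]
    exact hf.integrable_prod.integral_prod_right.const_mul C
  · exact ((hdiff.continuousOn.norm.pow 2).aestronglyMeasurable hX₂.measurableSet).mul
      hw₂.1.aestronglyMeasurable.restrict

/-- every `f ∈ A²(X₁×X₂, φ₁φ₂)` has all slices square-integrable:
`u ↦ f(ζ,u) ∈ A²(X₂,φ₂)` for every `ζ ∈ X₁`, and `z ↦ f(z,w) ∈ A²(X₁,φ₁)` for every
`w ∈ X₂`. -/
theorem slices_of_product_A2 {n m : ℕ}
    (X₁ : Set (Fin n → ℂ)) (X₂ : Set (Fin m → ℂ))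
    (hX₁ : IsOpen X₁) (hX₂ : IsOpen X₂)
    (φ₁ : (Fin n → ℂ) → ℝ) (φ₂ : (Fin m → ℂ) → ℝ)
    (hw₁ : IsWeight X₁ φ₁) (hw₂ : IsWeight X₂ φ₂)
    (he₁ : EvalBound X₁ φ₁) (he₂ : EvalBound X₂ φ₂)
    (f : (Fin n → ℂ) × (Fin m → ℂ) → ℂ)
    (hf : MemA2 (X₁ ×ˢ X₂) (prodWeight φ₁ φ₂) f) :
    (∀ ζ ∈ X₁, MemA2 X₂ φ₂ (fun u => f (ζ, u))) ∧
    (∀ w ∈ X₂, MemA2 X₁ φ₁ (fun z => f (z, w))) :=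
  ⟨fun _ hζ => hf.memA2_slice hX₂ hw₂ he₁ hζ, fun _ hw => hf.swap.memA2_slice hX₁ hw₁ he₂ hw⟩
end
end

section
/- Let M ⊆ ℂ^n and U ⊆ ℂ^m be domains, let γ be a weight on U, let e ∈ A²(U,γ), and let f : M × U → ℂ be holomorphic. Assume that for every compact subset K ⊆ M one has sup_{z∈K} ∫_U |f(z,u)|² γ(u) dλ(u) < ∞. Then for every z ∈ M the integral g(z) := ∫_U f(z,u)·conj(e(u))·γ(u) dλ(u) converges absolutely, the resulting function g is holomorphic on M, and its partial derivatives are obtained by differentiating under the integral sign: ∂g/∂z_j(z) = ∫_U (∂f/∂z_j)(z,u)·conj(e(u))·γ(u) dλ(u) for every 1 ≤ j ≤ n and z ∈ M. -/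
open MeasureTheory

noncomputable section

/-!
Closed balls of `Fin n → ℂ` (sup norm) are polydiscs. Since `f(·, u)²` has the mean value
property on circles, integrating in polar coordinates one variable at a time gives the sub-mean
value inequality `(π r²)ⁿ ‖f(ζ, u)‖² ≤ ∫_{P(ζ, r)} ‖f(w, u)‖² dw`. With the Cauchy estimate this
bounds `‖∂_z f(z, u)‖`, for `z` near `z₀`, by `√(B u)` up to a constant, where
`B u = ∫_K ‖f(w, u)‖² dw` over a polydisc `K ∋ z₀` in `M`; by Tonelli and the hypothesis on
compact sets, `B γ` is integrable over `U`. The AM-GM inequality against `e ∈ A²(U, γ)` then gives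
an integrable majorant of the differentiated integrand, and the theorem is differentiation under
the integral sign by dominated convergence. Measurability of the differentiated integrand comes
from the continuity of `u ↦ ∂_z f(z₀, u)`, again by the Cauchy estimate.
-/

open Metric Set Real

theorem ofReal_two_pi_mul_sq_norm_le_lintegral_circleMap {h : ℂ → ℂ} {c : ℂ} {r : ℝ}
    (hr : 0 ≤ r) (hd : DifferentiableOn ℂ h (closedBall c r)) :
    ENNReal.ofReal (2 * π * ‖h c‖ ^ 2)
      ≤ ∫⁻ θ in Ioo (-π) π, ENNReal.ofReal (‖h (circleMap c r θ)‖ ^ 2) := by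
  have hmean : circleAverage (h * h) c r = h c * h c :=
    ((hd.mul hd).diffContOnCl_ball (by rw [abs_of_nonneg hr])).circleAverage
  have hper : Function.Periodic (fun θ => ‖h (circleMap c r θ)‖ ^ 2) (2 * π) := fun θ => by
    simp only [periodic_circleMap c r θ]
  have hcont : Continuous fun θ => ‖h (circleMap c r θ)‖ ^ 2 :=
    (hd.continuousOn.comp_continuous (continuous_circleMap c r)
      (circleMap_mem_closedBall c hr)).norm.pow 2
  rw [← ofReal_integral_eq_lintegral_ofReal
    (hcont.integrableOn_Icc.mono_set Ioo_subset_Icc_self) (ae_of_all _ fun θ => by positivity),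
    ← integral_Ioc_eq_integral_Ioo, ← intervalIntegral.integral_of_le (by linarith [pi_pos])]
  refine ENNReal.ofReal_le_ofReal ?_
  calc 2 * π * ‖h c‖ ^ 2 = ‖∫ θ in (0)..2 * π, (h * h) (circleMap c r θ)‖ := by
        have h2pi : (2 * π) • circleAverage (h * h) c r
            = ∫ θ in (0)..2 * π, (h * h) (circleMap c r θ) := by
          rw [circleAverage_def, smul_smul, mul_inv_cancel₀ two_pi_pos.ne', one_smul]
        rw [← h2pi, hmean, norm_smul, Real.norm_of_nonneg two_pi_pos.le, norm_mul, sq]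
    _ ≤ ∫ θ in (0)..2 * π, ‖h (circleMap c r θ)‖ ^ 2 := by
        refine (intervalIntegral.norm_integral_le_integral_norm two_pi_pos.le).trans_eq ?_
        simp only [Pi.mul_apply, norm_mul, sq]
    _ = ∫ θ in (-π)..π, ‖h (circleMap c r θ)‖ ^ 2 := by
        simpa [show -π + 2 * π = π by ring] using (hper.intervalIntegral_add_eq (-π) 0).symm

theorem setLIntegral_Ioc_mul_lintegral_circleMap_le {g : ℂ → ENNReal} {c : ℂ} {r : ℝ}
    (hg : ContinuousOn g (closedBall c r)) :
    ∫⁻ s in Ioc 0 r, ENNReal.ofReal s * ∫⁻ θ in Ioo (-π) π, g (circleMap c s θ)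
      ≤ ∫⁻ w in closedBall c r, g w := by
  set A : Set (ℝ × ℝ) := Ioc 0 r ×ˢ Ioo (-π) π
  have hA : MeasurableSet A := measurableSet_Ioc.prod measurableSet_Ioo
  have hmaps : ∀ p ∈ A, circleMap c p.1 p.2 ∈ closedBall c r := fun p hp =>
    closedBall_subset_closedBall hp.1.2 (circleMap_mem_closedBall c hp.1.1.le p.2)
  have hmeas : AEMeasurable (fun p : ℝ × ℝ => ENNReal.ofReal p.1 * g (circleMap c p.1 p.2))
      (volume.restrict A) :=
    (ENNReal.measurable_ofReal.comp measurable_fst).aemeasurable.mul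
      ((hg.comp (by fun_prop) hmaps).aemeasurable hA)
  have hpolar : ∀ p : ℝ × ℝ, c + Complex.polarCoord.symm p = circleMap c p.1 p.2 := fun p => by
    simp [circleMap, Complex.exp_mul_I]
  calc _ = ∫⁻ p in A, ENNReal.ofReal p.1 * g (circleMap c p.1 p.2) := by
        rw [Measure.volume_eq_prod, setLIntegral_prod _ hmeas]
        simp_rw [lintegral_const_mul' _ _ ENNReal.ofReal_ne_top]
    _ = ∫⁻ p in A, ENNReal.ofReal p.1 •
          (closedBall c r).indicator g (c + Complex.polarCoord.symm p) :=
        setLIntegral_congr_fun hA fun p hp => by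
          rw [hpolar, indicator_of_mem (hmaps p hp), smul_eq_mul]
    _ ≤ ∫⁻ p in polarCoord.target, ENNReal.ofReal p.1 •
          (closedBall c r).indicator g (c + Complex.polarCoord.symm p) :=
        lintegral_mono_set (prod_mono Ioc_subset_Ioi_self subset_rfl)
    _ = ∫⁻ w, (closedBall c r).indicator g w := by
        rw [Complex.lintegral_comp_polarCoord_symm fun w => (closedBall c r).indicator g (c + w),
          lintegral_add_left_eq_self]
    _ = _ := lintegral_indicator measurableSet_closedBall _

theorem setLIntegral_Ioc_zero_ofReal {r : ℝ} (hr : 0 ≤ r) :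
    ∫⁻ s in Ioc 0 r, ENNReal.ofReal s = ENNReal.ofReal (r ^ 2 / 2) := by
  rw [← ofReal_integral_eq_lintegral_ofReal (f := fun s => s) continuous_id.integrableOn_Ioc
    (ae_restrict_of_forall_mem (s := Ioc 0 r) measurableSet_Ioc fun s hs => hs.1.le),
    ← intervalIntegral.integral_of_le hr, integral_id]
  ring_nf

theorem ofReal_pi_mul_sq_mul_le_setLIntegral_closedBall {h : ℂ → ℂ} {c : ℂ} {r : ℝ} (hr : 0 < r)
    (hd : DifferentiableOn ℂ h (closedBall c r)) :
    ENNReal.ofReal (π * r ^ 2) * ENNReal.ofReal (‖h c‖ ^ 2)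
      ≤ ∫⁻ w in closedBall c r, ENNReal.ofReal (‖h w‖ ^ 2) :=
  calc _ = ∫⁻ s in Ioc 0 r, ENNReal.ofReal s * ENNReal.ofReal (2 * π * ‖h c‖ ^ 2) := by
        rw [lintegral_mul_const' _ _ ENNReal.ofReal_ne_top, setLIntegral_Ioc_zero_ofReal hr.le,
          ← ENNReal.ofReal_mul (by positivity), ← ENNReal.ofReal_mul (by positivity)]
        ring_nf
    _ ≤ ∫⁻ s in Ioc 0 r, ENNReal.ofReal s *
          ∫⁻ θ in Ioo (-π) π, ENNReal.ofReal (‖h (circleMap c s θ)‖ ^ 2) :=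
        setLIntegral_mono' measurableSet_Ioc fun s hs => by
          gcongr
          exact ofReal_two_pi_mul_sq_norm_le_lintegral_circleMap hs.1.le
            (hd.mono (closedBall_subset_closedBall hs.2))
    _ ≤ _ := setLIntegral_Ioc_mul_lintegral_circleMap_le
        (ENNReal.continuous_ofReal.comp_continuousOn (hd.continuousOn.norm.pow 2))

theorem Fin.cons_mem_closedBall_iff {E : Type*} [PseudoMetricSpace E] {n : ℕ}
    {c : Fin (n + 1) → E} {r : ℝ} (hr : 0 ≤ r) (x : E) (p : Fin n → E) :
    (Fin.cons x p : Fin (n + 1) → E) ∈ closedBall c r ↔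
      x ∈ closedBall (c 0) r ∧ p ∈ closedBall (Fin.tail c) r := by
  simp only [mem_closedBall, dist_pi_le_iff hr, Fin.forall_fin_succ, Fin.cons_zero,
    Fin.cons_succ, Fin.tail]

theorem setLIntegral_closedBall_finCons {n : ℕ} {g : (Fin (n + 1) → ℂ) → ENNReal}
    {c : Fin (n + 1) → ℂ} {r : ℝ} (hr : 0 ≤ r) (hg : ContinuousOn g (closedBall c r)) :
    ∫⁻ x in closedBall (c 0) r, ∫⁻ p in closedBall (Fin.tail c) r, g (Fin.cons x p)
      = ∫⁻ w in closedBall c r, g w := by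
  set T := MeasurableEquiv.piFinSuccAbove (fun _ : Fin (n + 1) => ℂ) 0
  have hTapply : ∀ q, T.symm q = Fin.cons q.1 q.2 := fun q => by
    simp [T, MeasurableEquiv.piFinSuccAbove_symm_apply]
    rfl
  have hpre : T.symm ⁻¹' closedBall c r = closedBall (c 0) r ×ˢ closedBall (Fin.tail c) r := by
    ext ⟨x, p⟩
    simp only [mem_preimage, hTapply, Fin.cons_mem_closedBall_iff hr, mem_prod]
  have hmeas : AEMeasurable (fun q : ℂ × (Fin n → ℂ) => g (Fin.cons q.1 q.2))
      ((volume.prod volume).restrict (closedBall (c 0) r ×ˢ closedBall (Fin.tail c) r)) :=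
    (hg.comp (by fun_prop) fun q hq => (Fin.cons_mem_closedBall_iff hr q.1 q.2).2 hq).aemeasurable
      (measurableSet_closedBall.prod measurableSet_closedBall)
  calc _ = ∫⁻ q in closedBall (c 0) r ×ˢ closedBall (Fin.tail c) r, g (Fin.cons q.1 q.2) := by
        rw [Measure.volume_eq_prod, setLIntegral_prod _ hmeas]
    _ = ∫⁻ q in T.symm ⁻¹' closedBall c r, g (T.symm q) := by simp only [hpre, hTapply]
    _ = _ := (volume_preserving_piFinSuccAbove _ 0).symm.setLIntegral_comp_preimage_emb
        T.symm.measurableEmbedding g _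
theorem ofReal_pi_mul_sq_pow_mul_le_setLIntegral_closedBall :
    ∀ {n : ℕ} {h : (Fin n → ℂ) → ℂ} {c : Fin n → ℂ} {r : ℝ}, 0 < r →
      DifferentiableOn ℂ h (closedBall c r) →
      ENNReal.ofReal (π * r ^ 2) ^ n * ENNReal.ofReal (‖h c‖ ^ 2)
        ≤ ∫⁻ w in closedBall c r, ENNReal.ofReal (‖h w‖ ^ 2)
  | 0, h, c, r, hr, _ => by
    have : closedBall c r = univ := eq_univ_of_forall fun w => by
      rw [Subsingleton.elim w c]; exact mem_closedBall_self hr.le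
    simp [this, Subsingleton.elim _ c, volume_pi]
  | n + 1, h, c, r, hr, hd => by
    have hslice : ∀ x ∈ closedBall (c 0) r,
        DifferentiableOn ℂ (fun p => h (Fin.cons x p)) (closedBall (Fin.tail c) r) := fun x hx =>
      hd.comp (by fun_prop) fun p hp => (Fin.cons_mem_closedBall_iff hr.le x p).2 ⟨hx, hp⟩
    have hline : DifferentiableOn ℂ (fun x => h (Fin.cons x (Fin.tail c))) (closedBall (c 0) r) :=
      hd.comp (by fun_prop) fun x hx =>
        (Fin.cons_mem_closedBall_iff hr.le x _).2 ⟨hx, mem_closedBall_self hr.le⟩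
    calc ENNReal.ofReal (π * r ^ 2) ^ (n + 1) * ENNReal.ofReal (‖h c‖ ^ 2)
        = ENNReal.ofReal (π * r ^ 2) ^ n * (ENNReal.ofReal (π * r ^ 2) *
            ENNReal.ofReal (‖h (Fin.cons (c 0) (Fin.tail c))‖ ^ 2)) := by
          rw [Fin.cons_self_tail, pow_succ, mul_assoc]
      _ ≤ ENNReal.ofReal (π * r ^ 2) ^ n *
            ∫⁻ x in closedBall (c 0) r, ENNReal.ofReal (‖h (Fin.cons x (Fin.tail c))‖ ^ 2) :=
          mul_le_mul_right (ofReal_pi_mul_sq_mul_le_setLIntegral_closedBall hr hline) _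
      _ = ∫⁻ x in closedBall (c 0) r, ENNReal.ofReal (π * r ^ 2) ^ n *
            ENNReal.ofReal (‖h (Fin.cons x (Fin.tail c))‖ ^ 2) :=
          (lintegral_const_mul' _ _ (by finiteness)).symm
      _ ≤ ∫⁻ x in closedBall (c 0) r, ∫⁻ p in closedBall (Fin.tail c) r,
            ENNReal.ofReal (‖h (Fin.cons x p)‖ ^ 2) :=
          setLIntegral_mono' measurableSet_closedBall fun x hx =>
            ofReal_pi_mul_sq_pow_mul_le_setLIntegral_closedBall hr (hslice x hx)
      _ = _ := setLIntegral_closedBall_finCons hr.le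
          (ENNReal.continuous_ofReal.comp_continuousOn (hd.continuousOn.norm.pow 2))

theorem norm_fderiv_le_of_forall_norm_le {E F : Type*} [NormedAddCommGroup E] [NormedSpace ℂ E]
    [NormedAddCommGroup F] [NormedSpace ℂ F] {h : E → F} {z : E} {R S : ℝ} (hR : 0 < R)
    (hd : DifferentiableOn ℂ h (closedBall z R)) (hS : ∀ w ∈ closedBall z R, ‖h w‖ ≤ S) :
    ‖fderiv ℂ h z‖ ≤ S / R := by
  have hDz : HasFDerivAt h (fderiv ℂ h z) z :=
    (hd.differentiableAt (closedBall_mem_nhds z hR)).hasFDerivAt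
  refine ContinuousLinearMap.opNorm_le_of_unit_norm
    (div_nonneg ((norm_nonneg _).trans (hS z (mem_closedBall_self hR.le))) hR.le) fun v hv => ?_
  have hline : MapsTo (fun t : ℂ => z + t • v) (closedBall 0 R) (closedBall z R) := fun t ht => by
    simpa [norm_smul, hv] using ht
  have hderiv : HasDerivAt (fun t : ℂ => h (z + t • v)) (fderiv ℂ h z v) 0 := by
    have hl : HasDerivAt (fun t : ℂ => z + t • v) v 0 := by
      simpa using ((hasDerivAt_id (0 : ℂ)).smul_const v).const_add z
    exact (by simpa using hDz : HasFDerivAt h (fderiv ℂ h z) (z + (0 : ℂ) • v)).comp_hasDerivAt 0 hl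
  rw [← hderiv.deriv]
  exact Complex.norm_deriv_le_of_forall_mem_sphere_norm_le hR
    ((hd.comp (by fun_prop) hline).diffContOnCl_ball subset_rfl)
    fun t ht => hS _ (hline (sphere_subset_closedBall ht))

theorem norm_fderiv_le_sqrt_setIntegral {n : ℕ} {h : (Fin n → ℂ) → ℂ} {K : Set (Fin n → ℂ)}
    (hK : IsCompact K) (hd : DifferentiableOn ℂ h K) {z : Fin n → ℂ} {R : ℝ} (hR : 0 < R)
    (hzK : closedBall z (2 * R) ⊆ K) :
    ‖fderiv ℂ h z‖ ≤ √(((π * R ^ 2) ^ n)⁻¹ * ∫ w in K, ‖h w‖ ^ 2) / R := by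
  refine norm_fderiv_le_of_forall_norm_le hR
    (hd.mono ((closedBall_subset_closedBall (by linarith)).trans hzK)) fun w hw => ?_
  have hball : closedBall w R ⊆ K := by
    refine (closedBall_subset_closedBall' ?_).trans hzK
    rw [mem_closedBall] at hw
    linarith
  have hint : IntegrableOn (fun w => ‖h w‖ ^ 2) K :=
    (hd.continuousOn.norm.pow 2).integrableOn_compact hK
  have hmean : (π * R ^ 2) ^ n * ‖h w‖ ^ 2 ≤ ∫ w in K, ‖h w‖ ^ 2 := by
    rw [← ENNReal.ofReal_le_ofReal_iff (integral_nonneg fun w => by positivity),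
      ofReal_integral_eq_lintegral_ofReal hint (ae_of_all _ fun w => by positivity),
      ENNReal.ofReal_mul (by positivity), ENNReal.ofReal_pow (by positivity)]
    exact (ofReal_pi_mul_sq_pow_mul_le_setLIntegral_closedBall hR (hd.mono hball)).trans
      (lintegral_mono_set hball)
  rw [Real.le_sqrt (norm_nonneg _) (by positivity), le_inv_mul_iff₀ (by positivity)]
  exact hmean

theorem continuousOn_fderiv_of_continuousOn_prod {E F Y : Type*} [NormedAddCommGroup E]
    [NormedSpace ℂ E] [ProperSpace E] [NormedAddCommGroup F] [NormedSpace ℂ F] [TopologicalSpace Y]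
    {f : E × Y → F} {z₀ : E} {r : ℝ} {U : Set Y} (hr : 0 < r)
    (hf : ContinuousOn f (closedBall z₀ r ×ˢ U))
    (hd : ∀ u ∈ U, DifferentiableOn ℂ (fun z => f (z, u)) (closedBall z₀ r)) :
    ContinuousOn (fun u => fderiv ℂ (fun z => f (z, u)) z₀) U := by
  intro u₀ hu₀
  rw [Metric.continuousWithinAt_iff']
  intro ε hε
  obtain ⟨V, hV, hVf⟩ := (isCompact_closedBall z₀ r).mem_uniformity_of_prod
    (f := fun u z => f (z, u)) (hf.comp continuous_swap.continuousOn fun p hp => ⟨hp.2, hp.1⟩)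
    hu₀ (Metric.dist_mem_uniformity (half_pos (mul_pos hε hr)))
  have hdiff : ∀ u ∈ U, DifferentiableAt ℂ (fun z => f (z, u)) z₀ := fun u hu =>
    (hd u hu).differentiableAt (closedBall_mem_nhds z₀ hr)
  filter_upwards [hV, self_mem_nhdsWithin] with u hu huU
  rw [dist_eq_norm, ← fderiv_sub (hdiff u huU) (hdiff u₀ hu₀)]
  calc _ ≤ ε * r / 2 / r := norm_fderiv_le_of_forall_norm_le hr ((hd u huU).sub (hd u₀ hu₀))
        fun w hw => by
          rw [Pi.sub_apply, ← dist_eq_norm]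
          exact (hVf u hu w hw).le
    _ < ε := by
        rw [mul_div_right_comm, mul_div_cancel_right₀ _ hr.ne']
        exact half_lt_self hε

theorem integrable_integral_prod_of_lintegral_enorm_le {X Y E : Type*} [MeasurableSpace X]
    [MeasurableSpace Y] [NormedAddCommGroup E] [NormedSpace ℝ E] {μ : Measure X} {ν : Measure Y}
    [IsFiniteMeasure μ] [SFinite ν] {G : X × Y → E} {c : ENNReal}
    (hG : AEStronglyMeasurable G (μ.prod ν)) (hc : c ≠ ⊤)
    (hbound : ∀ᵐ x ∂μ, ∫⁻ y, ‖G (x, y)‖ₑ ∂ν ≤ c) :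
    Integrable (fun y => ∫ x, G (x, y) ∂μ) ν := by
  refine Integrable.integral_prod_right ⟨hG, ?_⟩
  rw [HasFiniteIntegral, lintegral_prod _ hG.enorm]
  calc ∫⁻ x, ∫⁻ y, ‖G (x, y)‖ₑ ∂ν ∂μ ≤ ∫⁻ _, c ∂μ := lintegral_mono_ae hbound
    _ < ⊤ := by
        rw [lintegral_const]
        exact ENNReal.mul_lt_top hc.lt_top (measure_lt_top μ univ)

section

variable {n m : ℕ} {M : Set (Fin n → ℂ)} {U : Set (Fin m → ℂ)} {γ : (Fin m → ℂ) → ℝ}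
  {e : (Fin m → ℂ) → ℂ} {f : (Fin n → ℂ) × (Fin m → ℂ) → ℂ}

theorem integrableOn_slice_mul_conj_mul (hU : MeasurableSet U) (hγ : IsWeight U γ)
    (he : MemA2 U γ e) (hf : ContinuousOn f (M ×ˢ U))
    (hbdd : ∀ K : Set (Fin n → ℂ), K ⊆ M → IsCompact K → ∃ C : ℝ, ∀ z ∈ K,
      ∫⁻ u in U, ENNReal.ofReal (‖f (z, u)‖ ^ 2 * γ u) ≤ ENNReal.ofReal C)
    {z : Fin n → ℂ} (hz : z ∈ M) :
    IntegrableOn (fun u => f (z, u) * (starRingEnd ℂ) (e u) * (γ u : ℂ)) U := by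
  obtain ⟨C, hC⟩ := hbdd {z} (singleton_subset_iff.2 hz) isCompact_singleton
  have hfz : ContinuousOn (fun u => f (z, u)) U := hf.comp (by fun_prop) fun u hu => ⟨hz, hu⟩
  have hf2 : IntegrableOn (fun u => ‖f (z, u)‖ ^ 2 * γ u) U :=
    (lintegral_ofReal_ne_top_iff_integrable
      (((hfz.norm.pow 2).aestronglyMeasurable hU).mul hγ.1.aestronglyMeasurable)
      (hγ.2.mono fun u hu => mul_nonneg (sq_nonneg _) hu.le)).1
      ((hC z rfl).trans_lt ENNReal.ofReal_lt_top).ne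
  refine ((hf2.fun_add he.2).div_const 2).mono' (((hfz.aestronglyMeasurable hU).mul
    ((Complex.continuous_conj.comp_continuousOn he.1.continuousOn).aestronglyMeasurable hU)).mul
    (Complex.measurable_ofReal.comp hγ.1).aestronglyMeasurable) ?_
  filter_upwards [hγ.2] with u hu
  rw [norm_mul, norm_mul, Complex.norm_conj, Complex.norm_real, Real.norm_of_nonneg hu.le]
  nlinarith [mul_le_mul_of_nonneg_right (two_mul_le_add_sq ‖f (z, u)‖ ‖e u‖) hu.le]

theorem integrableOn_setIntegral_sq_norm_mul {K : Set (Fin n → ℂ)} (hK : IsCompact K)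
    (hU : MeasurableSet U) (hγ : IsWeight U γ) (hf : ContinuousOn f (K ×ˢ U)) {C : ℝ}
    (hC : ∀ z ∈ K, ∫⁻ u in U, ENNReal.ofReal (‖f (z, u)‖ ^ 2 * γ u) ≤ ENNReal.ofReal C) :
    IntegrableOn (fun u => (∫ w in K, ‖f (w, u)‖ ^ 2) * γ u) U := by
  have : IsFiniteMeasure (volume.restrict K) :=
    ⟨by rw [Measure.restrict_apply_univ]; exact hK.measure_lt_top⟩
  have hmeas : AEStronglyMeasurable (fun p => ‖f p‖ ^ 2 * γ p.2)
      ((volume.restrict K).prod (volume.restrict U)) := by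
    rw [Measure.prod_restrict, ← Measure.volume_eq_prod]
    exact ((hf.norm.pow 2).aestronglyMeasurable (hK.measurableSet.prod hU)).mul
      (hγ.1.comp measurable_snd).aestronglyMeasurable
  have hbound : ∀ᵐ z ∂(volume.restrict K),
      ∫⁻ u in U, ‖‖f (z, u)‖ ^ 2 * γ u‖ₑ ≤ ENNReal.ofReal C := by
    refine ae_restrict_of_forall_mem hK.measurableSet fun z hz => le_of_eq_of_le ?_ (hC z hz)
    refine lintegral_congr_ae (hγ.2.mono fun u hu => ?_)
    exact Real.enorm_of_nonneg (mul_nonneg (by positivity) hu.le)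
  rw [IntegrableOn]
  simpa only [integral_mul_const] using
    integrable_integral_prod_of_lintegral_enorm_le hmeas ENNReal.ofReal_ne_top hbound

theorem exists_ball_integrableOn_bound_fderiv (hMo : IsOpen M) (hU : MeasurableSet U)
    (hγ : IsWeight U γ) (he : MemA2 U γ e)
    (hf : ContinuousOn f (M ×ˢ U)) (hfd : ∀ u ∈ U, DifferentiableOn ℂ (fun z => f (z, u)) M)
    (hbdd : ∀ K : Set (Fin n → ℂ), K ⊆ M → IsCompact K → ∃ C : ℝ, ∀ z ∈ K,
      ∫⁻ u in U, ENNReal.ofReal (‖f (z, u)‖ ^ 2 * γ u) ≤ ENNReal.ofReal C)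
    {z₀ : Fin n → ℂ} (hz₀ : z₀ ∈ M) :
    ∃ R > 0, ball z₀ R ⊆ M ∧ ∃ bound : (Fin m → ℂ) → ℝ, IntegrableOn bound U ∧
      ∀ᵐ u ∂(volume.restrict U), ∀ z ∈ ball z₀ R,
        ‖((starRingEnd ℂ) (e u) * (γ u : ℂ)) • fderiv ℂ (fun z' => f (z', u)) z‖ ≤ bound u := by
  obtain ⟨ε, hε, hεM⟩ := nhds_basis_closedBall.mem_iff.1 (hMo.mem_nhds hz₀)
  obtain ⟨R, hR, rfl⟩ : ∃ R > 0, ε = 3 * R := ⟨ε / 3, by positivity, by ring⟩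
  obtain ⟨C, hC⟩ := hbdd _ hεM (isCompact_closedBall z₀ _)
  set κ := ((π * R ^ 2) ^ n)⁻¹
  set B := fun u => ∫ w in closedBall z₀ (3 * R), ‖f (w, u)‖ ^ 2
  have hB : IntegrableOn (fun u => B u * γ u) U := integrableOn_setIntegral_sq_norm_mul
    (isCompact_closedBall z₀ _) hU hγ (hf.mono (prod_mono hεM subset_rfl)) hC
  -- The AM-GM bound on `‖e u‖ γ u √(κ B u) / R`: integrable without measurability of `B`.
  refine ⟨R, hR,
    ball_subset_closedBall.trans ((closedBall_subset_closedBall (by linarith)).trans hεM),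
    fun u => (κ * (B u * γ u) + ‖e u‖ ^ 2 * γ u) / (2 * R),
    ((hB.const_mul κ).fun_add he.2).div_const _, ?_⟩
  filter_upwards [ae_restrict_mem hU, hγ.2] with u hu hγu z hz
  have hfderiv : ‖fderiv ℂ (fun z' => f (z', u)) z‖ ≤ √(κ * B u) / R := by
    refine norm_fderiv_le_sqrt_setIntegral (isCompact_closedBall z₀ _) ((hfd u hu).mono hεM) hR ?_
    refine closedBall_subset_closedBall' ?_
    rw [mem_ball] at hz
    linarith
  have hamgm : 2 * √(κ * B u) * ‖e u‖ ≤ κ * B u + ‖e u‖ ^ 2 := by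
    have := two_mul_le_add_sq √(κ * B u) ‖e u‖
    rwa [Real.sq_sqrt (mul_nonneg (by positivity) (integral_nonneg fun w => by positivity))] at this
  rw [norm_smul, norm_mul, Complex.norm_conj, Complex.norm_real, Real.norm_of_nonneg hγu.le]
  calc ‖e u‖ * γ u * ‖fderiv ℂ (fun z' => f (z', u)) z‖ ≤ ‖e u‖ * γ u * (√(κ * B u) / R) := by
        gcongr
    _ = 2 * √(κ * B u) * ‖e u‖ * γ u / (2 * R) := by
        field_simp
    _ ≤ (κ * B u + ‖e u‖ ^ 2) * γ u / (2 * R) := by gcongr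
    _ = _ := by ring

theorem hasFDerivAt_setIntegral_mul_conj_mul (hMo : IsOpen M) (hUo : IsOpen U)
    (hγ : IsWeight U γ) (he : MemA2 U γ e) (hf : DifferentiableOn ℂ f (M ×ˢ U))
    (hbdd : ∀ K : Set (Fin n → ℂ), K ⊆ M → IsCompact K → ∃ C : ℝ, ∀ z ∈ K,
      ∫⁻ u in U, ENNReal.ofReal (‖f (z, u)‖ ^ 2 * γ u) ≤ ENNReal.ofReal C)
    {z₀ : Fin n → ℂ} (hz₀ : z₀ ∈ M) :
    HasFDerivAt (fun z => ∫ u in U, f (z, u) * (starRingEnd ℂ) (e u) * (γ u : ℂ))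
      (∫ u in U, ((starRingEnd ℂ) (e u) * (γ u : ℂ)) • fderiv ℂ (fun z => f (z, u)) z₀) z₀ ∧
    IntegrableOn
      (fun u => ((starRingEnd ℂ) (e u) * (γ u : ℂ)) • fderiv ℂ (fun z => f (z, u)) z₀) U := by
  have hU := hUo.measurableSet
  have hfd : ∀ u ∈ U, DifferentiableOn ℂ (fun z => f (z, u)) M := fun u hu =>
    hf.comp (by fun_prop) fun z hz => ⟨hz, hu⟩
  obtain ⟨R, hR, hRM, bound, hbound_int, hbound⟩ :=
    exists_ball_integrableOn_bound_fderiv hMo hU hγ he hf.continuousOn hfd hbdd hz₀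
  obtain ⟨r, hr, hrM⟩ := nhds_basis_closedBall.mem_iff.1 (hMo.mem_nhds hz₀)
  have hF'_meas : AEStronglyMeasurable
      (fun u => ((starRingEnd ℂ) (e u) * (γ u : ℂ)) • fderiv ℂ (fun z => f (z, u)) z₀)
      (volume.restrict U) :=
    (((Complex.continuous_conj.comp_continuousOn he.1.continuousOn).aestronglyMeasurable hU).mul
      (Complex.measurable_ofReal.comp hγ.1).aestronglyMeasurable).fun_smul
      ((continuousOn_fderiv_of_continuousOn_prod hr
        (hf.continuousOn.mono (prod_mono hrM subset_rfl))
        fun u hu => (hfd u hu).mono hrM).aestronglyMeasurable hU)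
  have h_diff : ∀ᵐ u ∂(volume.restrict U), ∀ z ∈ ball z₀ R,
      HasFDerivAt (fun z => f (z, u) * (starRingEnd ℂ) (e u) * (γ u : ℂ))
        (((starRingEnd ℂ) (e u) * (γ u : ℂ)) • fderiv ℂ (fun z => f (z, u)) z) z := by
    filter_upwards [ae_restrict_mem hU] with u hu z hz
    simpa only [mul_assoc] using
      ((hfd u hu).differentiableAt (hMo.mem_nhds (hRM hz))).hasFDerivAt.mul_const
        ((starRingEnd ℂ) (e u) * (γ u : ℂ))
  exact ⟨hasFDerivAt_integral_of_dominated_of_fderiv_le (ball_mem_nhds z₀ hR)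
      (Filter.eventually_of_mem (hMo.mem_nhds hz₀) fun z hz =>
        (integrableOn_slice_mul_conj_mul hU hγ he hf.continuousOn hbdd hz).aestronglyMeasurable)
      (integrableOn_slice_mul_conj_mul hU hγ he hf.continuousOn hbdd hz₀) hF'_meas hbound
      hbound_int h_diff,
    hbound_int.mono' hF'_meas (hbound.mono fun u hu => hu z₀ (mem_ball_self hR))⟩

end

theorem differentiation_under_integral_sign_general {n m : ℕ}
    (M : Set (Fin n → ℂ)) (hMo : IsOpen M)
    (U : Set (Fin m → ℂ)) (hUo : IsOpen U)
    (γ : (Fin m → ℂ) → ℝ) (hw : IsWeight U γ)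
    (e : (Fin m → ℂ) → ℂ) (he : MemA2 U γ e)
    (f : (Fin n → ℂ) × (Fin m → ℂ) → ℂ)
    (hf : DifferentiableOn ℂ f (M ×ˢ U))
    (hbdd : ∀ K : Set (Fin n → ℂ), K ⊆ M → IsCompact K → ∃ C : ℝ, ∀ z ∈ K,
      ∫⁻ u in U, ENNReal.ofReal (‖f (z, u)‖ ^ 2 * γ u) ≤ ENNReal.ofReal C) :
    (∀ z ∈ M, IntegrableOn
      (fun u => f (z, u) * (starRingEnd ℂ) (e u) * (γ u : ℂ)) U volume) ∧
    DifferentiableOn ℂ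
      (fun z => ∫ u in U, f (z, u) * (starRingEnd ℂ) (e u) * (γ u : ℂ)) M ∧
    (∀ j : Fin n, ∀ z ∈ M,
      fderiv ℂ (fun z' => ∫ u in U, f (z', u) * (starRingEnd ℂ) (e u) * (γ u : ℂ)) z
          (Pi.single j 1)
        = ∫ u in U, (fderiv ℂ (fun z' => f (z', u)) z (Pi.single j 1))
            * (starRingEnd ℂ) (e u) * (γ u : ℂ)) := by
  have hderiv := fun z (hz : z ∈ M) =>
    hasFDerivAt_setIntegral_mul_conj_mul hMo hUo hw he hf hbdd hz
  refine ⟨fun z hz =>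
      integrableOn_slice_mul_conj_mul hUo.measurableSet hw he hf.continuousOn hbdd hz,
    fun z hz => (hderiv z hz).1.differentiableAt.differentiableWithinAt, fun j z hz => ?_⟩
  rw [(hderiv z hz).1.fderiv, ContinuousLinearMap.integral_apply (hderiv z hz).2]
  refine setIntegral_congr_fun hUo.measurableSet fun u _ => ?_
  simp only [smul_apply, smul_eq_mul]
  ring

/-- differentiation under the integral sign for
`g(z) = ∫_U f(z,u)·conj(e(u))·γ(u) dλ(u)`, assuming the locally uniform bound
`sup_{z∈K} ∫_U |f(z,u)|² γ(u) dλ(u) < ∞` on compact subsets `K ⊆ M`. -/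
theorem differentiation_under_integral_sign {n m : ℕ}
    (M : Set (Fin n → ℂ)) (hMo : IsOpen M) (hMc : IsConnected M)
    (U : Set (Fin m → ℂ)) (hUo : IsOpen U) (hUc : IsConnected U)
    (γ : (Fin m → ℂ) → ℝ) (hw : IsWeight U γ)
    (e : (Fin m → ℂ) → ℂ) (he : MemA2 U γ e)
    (f : (Fin n → ℂ) × (Fin m → ℂ) → ℂ)
    (hf : DifferentiableOn ℂ f (M ×ˢ U))
    (hbdd : ∀ K : Set (Fin n → ℂ), K ⊆ M → IsCompact K → ∃ C : ℝ, ∀ z ∈ K,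
      ∫⁻ u in U, ENNReal.ofReal (‖f (z, u)‖ ^ 2 * γ u) ≤ ENNReal.ofReal C) :
    (∀ z ∈ M, IntegrableOn
      (fun u => f (z, u) * (starRingEnd ℂ) (e u) * (γ u : ℂ)) U volume) ∧
    DifferentiableOn ℂ
      (fun z => ∫ u in U, f (z, u) * (starRingEnd ℂ) (e u) * (γ u : ℂ)) M ∧
    (∀ j : Fin n, ∀ z ∈ M,
      fderiv ℂ (fun z' => ∫ u in U, f (z', u) * (starRingEnd ℂ) (e u) * (γ u : ℂ)) z
          (Pi.single j 1)
        = ∫ u in U, (fderiv ℂ (fun z' => f (z', u)) z (Pi.single j 1))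
            * (starRingEnd ℂ) (e u) * (γ u : ℂ)) :=
  differentiation_under_integral_sign_general M hMo U hUo γ hw e he f hf hbdd
end
end
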